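/- arXiv:2601.14033 — 2 statements merged into one kernel-verified Lean document; each statement's English description precedes it below -/
import Mathlib

section
/- Let S take two values s₀, s₁ each with probability 1/2, and let R = f(S) + Z where f : {s₀,s₁} → ℝ and Z ~ N(0, σ²) with σ² = (f(s₁) − f(s₀))² / (8B) for B > 0. Then I(S; R) ≤ B. -/
open MeasureTheory ProbabilityTheory
open scoped ENNReal NNReal Classical

/-- Kullback–Leibler divergence (in nats) between two measures, `∞` if `μ` is not
absolutely continuous w.r.t. `ν` or the log-likelihood ratio is not integrable. -/

noncomputable def klDiv {α : Type*} [MeasurableSpace α] (μ ν : Measure α) : ℝ≥0∞ :=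
  if μ ≪ ν ∧ Integrable (fun x => Real.log (μ.rnDeriv ν x).toReal) μ then
    ENNReal.ofReal (∫ x, Real.log (μ.rnDeriv ν x).toReal ∂μ)
  else ⊤

/-- Mutual information (in nats) between two random variables: the KL divergence
between the joint law and the product of the marginal laws. -/
noncomputable def mutualInfo {Ω α β : Type*} [MeasurableSpace Ω] [MeasurableSpace α]
    [MeasurableSpace β] (P : Measure Ω) (X : Ω → α) (Y : Ω → β) : ℝ≥0∞ :=
  klDiv (P.map fun ω => (X ω, Y ω)) ((P.map X).prod (P.map Y))

namespace TwoPointAux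

open Real

variable {v : ℝ≥0}

lemma coe_pos (hv : v ≠ 0) : 0 < (v : ℝ) :=
  NNReal.coe_pos.mpr (pos_iff_ne_zero.mpr hv)

lemma smul_prod {α β : Type*} [MeasurableSpace α] [MeasurableSpace β]
    (c : ℝ≥0∞) (μ : Measure α) (ν : Measure β) [SFinite μ] [SFinite ν] :
    (c • μ).prod ν = c • (μ.prod ν) := by
  ext s hs
  rw [Measure.prod_apply hs, Measure.smul_apply, smul_eq_mul, Measure.prod_apply hs,
    lintegral_smul_measure, smul_eq_mul]

lemma withDensity_map {α β : Type*} [MeasurableSpace α] [MeasurableSpace β]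
    {g : α → β} (hg : MeasurableEmbedding g) (μ : Measure α) {f : β → ℝ≥0∞}
    (hf : Measurable f) :
    (μ.map g).withDensity f = (μ.withDensity (fun x => f (g x))).map g := by
  ext s hs
  rw [withDensity_apply _ hs, Measure.restrict_map hg.measurable hs,
    lintegral_map hf hg.measurable, hg.map_apply,
    withDensity_apply _ (hg.measurable hs)]

lemma continuous_gaussianPDFReal (c : ℝ) : Continuous (gaussianPDFReal c v) := by
  unfold gaussianPDFReal
  continuity

lemma gauss_integral_eq (c : ℝ) (hv : v ≠ 0) (φ : ℝ → ℝ) :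
    ∫ x, φ x ∂(gaussianReal c v) = ∫ x, φ x * gaussianPDFReal c v x := by
  rw [gaussianReal_of_var_ne_zero c hv]
  have h1 : gaussianPDF c v = fun x => ((Real.toNNReal (gaussianPDFReal c v x) : ℝ≥0) : ℝ≥0∞) := rfl
  rw [h1, integral_withDensity_eq_integral_smul (measurable_gaussianPDFReal c v).real_toNNReal φ]
  congr 1
  funext x
  rw [NNReal.smul_def, Real.coe_toNNReal _ (gaussianPDFReal_nonneg c v x), smul_eq_mul, mul_comm]

lemma gauss_integrable_iff (c : ℝ) (hv : v ≠ 0) {φ : ℝ → ℝ} :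
    Integrable φ (gaussianReal c v) ↔
      Integrable (fun x => φ x * gaussianPDFReal c v x) volume := by
  rw [gaussianReal_of_var_ne_zero c hv,
    integrable_withDensity_iff (measurable_gaussianPDF c v)
      (ae_of_all _ fun x => ENNReal.ofReal_lt_top)]
  simp only [gaussianPDF, ENNReal.toReal_ofReal (gaussianPDFReal_nonneg c v _)]

lemma gauss_integrable_id0 (hv : v ≠ 0) : Integrable (fun x : ℝ => x) (gaussianReal 0 v) := by
  rw [gauss_integrable_iff 0 hv]
  have hb : 0 < ((2:ℝ) * v)⁻¹ := by
    have := coe_pos hv; positivity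
  have h := (integrable_mul_exp_neg_mul_sq hb).const_mul (Real.sqrt (2 * π * v))⁻¹
  refine h.congr (ae_of_all _ fun x => ?_)
  simp only [gaussianPDFReal]
  have harg : -((2:ℝ) * v)⁻¹ * x ^ 2 = -(x - 0) ^ 2 / (2 * v) := by
    field_simp
    ring
  rw [← harg]
  ring

lemma gauss_map_const_add (c : ℝ) : (gaussianReal 0 v).map (fun x => c + x) = gaussianReal c v := by
  have h := gaussianReal_map_const_add (μ := 0) (v := v) c
  simpa using h

lemma gauss_integrable_id (c : ℝ) (hv : v ≠ 0) :
    Integrable (fun x : ℝ => x) (gaussianReal c v) := by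
  have he : MeasurableEmbedding (fun x : ℝ => c + x) := by
    have h := (Homeomorph.addLeft c).measurableEmbedding
    have : ⇑(Homeomorph.addLeft c) = fun x : ℝ => c + x := by funext x; simp
    rwa [this] at h
  rw [← gauss_map_const_add c, he.integrable_map_iff]
  exact (integrable_const c).add (gauss_integrable_id0 hv)

lemma gauss_mean0 (hv : v ≠ 0) : ∫ x, x ∂(gaussianReal 0 v) = 0 := by
  rw [gauss_integral_eq 0 hv]
  have heven : ∀ x : ℝ, gaussianPDFReal 0 v (-x) = gaussianPDFReal 0 v x := by
    intro x
    simp [gaussianPDFReal, neg_sq]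
  have h := integral_neg_eq_self (fun x : ℝ => x * gaussianPDFReal 0 v x) volume
  have h2 : ∫ x : ℝ, (-x) * gaussianPDFReal 0 v (-x) = ∫ x : ℝ, x * gaussianPDFReal 0 v x := h
  have h3 : ∫ x : ℝ, (-x) * gaussianPDFReal 0 v (-x) = -∫ x : ℝ, x * gaussianPDFReal 0 v x := by
    rw [← integral_neg]
    congr 1
    funext x
    rw [heven x]
    ring
  linarith [h2, h3.symm.trans h2]

lemma gauss_mean (c : ℝ) (hv : v ≠ 0) : ∫ x, x ∂(gaussianReal c v) = c := by
  rw [← gauss_map_const_add c,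
    integral_map (measurable_const_add c).aemeasurable measurable_id'.aestronglyMeasurable]
  rw [integral_add (integrable_const c) (gauss_integrable_id0 hv), integral_const, gauss_mean0 hv]
  simp

lemma gauss_integrable_of_bound (c : ℝ) (hv : v ≠ 0) {φ : ℝ → ℝ} (hφ : Continuous φ)
    (C1 C2 : ℝ) (h : ∀ x, |φ x| ≤ C1 + C2 * |x|) :
    Integrable φ (gaussianReal c v) := by
  have h1 : Integrable (fun x => C1 + C2 * |x|) (gaussianReal c v) :=
    (integrable_const C1).add (((gauss_integrable_id c hv).abs).const_mul C2)
  exact h1.mono' hφ.aestronglyMeasurable (ae_of_all _ fun x => by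
    simpa [Real.norm_eq_abs] using h x)

lemma gauss_integrable_linear (p q c : ℝ) (hv : v ≠ 0) :
    Integrable (fun x : ℝ => p * x + q) (gaussianReal c v) :=
  ((gauss_integrable_id c hv).const_mul p).add (integrable_const q)

lemma gauss_integral_linear (p q c : ℝ) (hv : v ≠ 0) :
    ∫ x, (p * x + q) ∂(gaussianReal c v) = p * c + q := by
  rw [integral_add ((gauss_integrable_id c hv).const_mul p) (integrable_const q),
    integral_const_mul, gauss_mean c hv, integral_const]
  simp

lemma log_gaussianPDFReal (c : ℝ) (hv : v ≠ 0) (x : ℝ) :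
    Real.log (gaussianPDFReal c v x)
      = -(x - c) ^ 2 / (2 * v) - Real.log (Real.sqrt (2 * π * v)) := by
  have hvr := coe_pos hv
  simp only [gaussianPDFReal]
  rw [Real.log_mul (by positivity) (Real.exp_ne_zero _), Real.log_inv, Real.log_exp]
  ring


/-- the symmetric mixture density -/
noncomputable def qRe (v : ℝ≥0) (a b : ℝ) (x : ℝ) : ℝ :=
  (gaussianPDFReal a v x + gaussianPDFReal b v x) / 2

noncomputable def mid (a b : ℝ) : ℝ := (a + b) / 2

noncomputable def Efun (v : ℝ≥0) (a b c : ℝ) (x : ℝ) : ℝ :=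
  (c - mid a b) / (v : ℝ) * x + ((mid a b) ^ 2 - c ^ 2) / (2 * (v : ℝ))

noncomputable def T2fun (v : ℝ≥0) (a b : ℝ) (x : ℝ) : ℝ :=
  Real.log (gaussianPDFReal (mid a b) v x) - Real.log (qRe v a b x)

noncomputable def Wfun (v : ℝ≥0) (a b : ℝ) (x : ℝ) : ℝ :=
  gaussianPDFReal (mid a b) v x / qRe v a b x - 1

variable {a b : ℝ}

lemma qRe_pos (hv : v ≠ 0) (x : ℝ) : 0 < qRe v a b x := by
  have h1 := gaussianPDFReal_pos a v x hv
  have h2 := gaussianPDFReal_pos b v x hv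
  unfold qRe; linarith

lemma continuous_qRe : Continuous (qRe v a b) :=
  ((continuous_gaussianPDFReal a).add (continuous_gaussianPDFReal b)).div_const 2

lemma log_sub_log (hv : v ≠ 0) (c x : ℝ) :
    Real.log (gaussianPDFReal c v x) - Real.log (gaussianPDFReal (mid a b) v x)
      = Efun v a b c x := by
  have hvr := coe_pos hv
  rw [log_gaussianPDFReal c hv, log_gaussianPDFReal (mid a b) hv]
  unfold Efun
  field_simp
  ring

lemma integrable_Efun (hv : v ≠ 0) (c c' : ℝ) :
    Integrable (Efun v a b c) (gaussianReal c' v) :=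
  gauss_integrable_linear _ _ _ hv

lemma integral_Efun_self (hv : v ≠ 0) (c : ℝ) :
    ∫ x, Efun v a b c x ∂(gaussianReal c v) = (c - mid a b) ^ 2 / (2 * (v : ℝ)) := by
  have hvr := coe_pos hv
  unfold Efun
  rw [gauss_integral_linear _ _ _ hv]
  field_simp
  ring

lemma abs_Efun_le (c x : ℝ) :
    |Efun v a b c x| ≤ |((mid a b) ^ 2 - c ^ 2) / (2 * (v : ℝ))|
      + |(c - mid a b) / (v : ℝ)| * |x| := by
  unfold Efun
  calc |(c - mid a b) / (v:ℝ) * x + ((mid a b) ^ 2 - c ^ 2) / (2 * (v:ℝ))|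
      ≤ |(c - mid a b) / (v:ℝ) * x| + |((mid a b) ^ 2 - c ^ 2) / (2 * (v:ℝ))| := abs_add_le _ _
    _ = |((mid a b) ^ 2 - c ^ 2) / (2 * (v:ℝ))| + |(c - mid a b) / (v:ℝ)| * |x| := by
        rw [abs_mul]; ring

lemma T2_bound (hv : v ≠ 0) (x : ℝ) :
    |T2fun v a b x| ≤ Real.log 2 + |Efun v a b a x| + |Efun v a b b x| := by
  have hga := gaussianPDFReal_pos a v x hv
  have hgb := gaussianPDFReal_pos b v x hv
  have hgm := gaussianPDFReal_pos (mid a b) v x hv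
  have hq := qRe_pos (a := a) (b := b) hv x
  have hlog2 : (0:ℝ) ≤ Real.log 2 := Real.log_nonneg (by norm_num)
  have hDa := log_sub_log (a := a) (b := b) hv a x
  have hDb := log_sub_log (a := a) (b := b) hv b x
  have habsa := le_abs_self (Efun v a b a x)
  have habsb := le_abs_self (Efun v a b b x)
  have hnega := neg_abs_le (Efun v a b a x)
  have hnegb := neg_abs_le (Efun v a b b x)
  have hupper : T2fun v a b x ≤ Real.log 2 + |Efun v a b a x| + |Efun v a b b x| := by
    have hle : gaussianPDFReal a v x / 2 ≤ qRe v a b x := by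
      unfold qRe; linarith
    have h1 := Real.log_le_log (by positivity) hle
    rw [Real.log_div hga.ne' two_ne_zero] at h1
    unfold T2fun
    linarith
  have hlower : -(Real.log 2 + |Efun v a b a x| + |Efun v a b b x|) ≤ T2fun v a b x := by
    rcases le_total (gaussianPDFReal a v x) (gaussianPDFReal b v x) with h | h
    · have hle : qRe v a b x ≤ gaussianPDFReal b v x := by unfold qRe; linarith
      have h1 := Real.log_le_log hq hle
      unfold T2fun
      linarith
    · have hle : qRe v a b x ≤ gaussianPDFReal a v x := by unfold qRe; linarith
      have h1 := Real.log_le_log hq hle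
      unfold T2fun
      linarith
  exact abs_le.mpr ⟨hlower, hupper⟩

lemma continuous_T2 (hv : v ≠ 0) : Continuous (T2fun v a b) := by
  unfold T2fun
  exact ((continuous_gaussianPDFReal (mid a b)).log
      fun x => (gaussianPDFReal_pos _ v x hv).ne').sub
    (continuous_qRe.log fun x => (qRe_pos hv x).ne')

lemma integrable_T2 (hv : v ≠ 0) (c : ℝ) :
    Integrable (T2fun v a b) (gaussianReal c v) := by
  refine gauss_integrable_of_bound c hv (continuous_T2 hv)
    (Real.log 2 + |((mid a b) ^ 2 - a ^ 2) / (2 * (v:ℝ))| + |((mid a b) ^ 2 - b ^ 2) / (2 * (v:ℝ))|)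
    (|(a - mid a b) / (v:ℝ)| + |(b - mid a b) / (v:ℝ)|) fun x => ?_
  have h1 := T2_bound (a := a) (b := b) hv x
  have h2 := abs_Efun_le (v := v) (a := a) (b := b) a x
  have h3 := abs_Efun_le (v := v) (a := a) (b := b) b x
  have h4 : (0:ℝ) ≤ |x| := abs_nonneg x
  nlinarith

lemma prod_identity (hv : v ≠ 0) (x : ℝ) :
    gaussianPDFReal a v x * gaussianPDFReal b v x
      = Real.exp (-(b - a) ^ 2 / (4 * (v:ℝ))) * (gaussianPDFReal (mid a b) v x) ^ 2 := by
  have hvr := coe_pos hv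
  have key : ∀ s u1 u2 w u3 : ℝ, u1 + u2 = w + (u3 + u3) →
      (s * Real.exp u1) * (s * Real.exp u2) = Real.exp w * (s * Real.exp u3) ^ 2 := by
    intro s u1 u2 w u3 h
    have h2 : Real.exp u1 * Real.exp u2 = Real.exp w * (Real.exp u3 * Real.exp u3) := by
      rw [← Real.exp_add, ← Real.exp_add, ← Real.exp_add, h]
    calc (s * Real.exp u1) * (s * Real.exp u2) = s ^ 2 * (Real.exp u1 * Real.exp u2) := by ring
      _ = s ^ 2 * (Real.exp w * (Real.exp u3 * Real.exp u3)) := by rw [h2]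
      _ = Real.exp w * (s * Real.exp u3) ^ 2 := by ring
  simp only [gaussianPDFReal]
  refine key _ _ _ _ _ ?_
  unfold mid
  field_simp
  ring

lemma gm_le (hv : v ≠ 0) (x : ℝ) :
    gaussianPDFReal (mid a b) v x
      ≤ Real.exp ((b - a) ^ 2 / (8 * (v:ℝ))) * qRe v a b x := by
  have hvr := coe_pos hv
  have hga := gaussianPDFReal_pos a v x hv
  have hgb := gaussianPDFReal_pos b v x hv
  have hgm := gaussianPDFReal_pos (mid a b) v x hv
  set u : ℝ := Real.exp ((b - a) ^ 2 / (8 * (v:ℝ))) with hu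
  have hupos : 0 < u := Real.exp_pos _
  have hprod := prod_identity (a := a) (b := b) hv x
  have hexp : Real.exp (-(b - a) ^ 2 / (4 * (v:ℝ))) = (u ^ 2)⁻¹ := by
    rw [hu, ← Real.exp_nat_mul, ← Real.exp_neg]
    congr 1
    field_simp
    ring
  rw [hexp] at hprod
  have hkey : u ^ 2 * (gaussianPDFReal a v x * gaussianPDFReal b v x)
      = (gaussianPDFReal (mid a b) v x) ^ 2 := by
    rw [hprod]; field_simp
  have hgoal : 2 * gaussianPDFReal (mid a b) v x
      ≤ u * gaussianPDFReal a v x + u * gaussianPDFReal b v x := by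
    nlinarith [sq_nonneg (u * gaussianPDFReal a v x - u * gaussianPDFReal b v x),
      sq_nonneg (u * gaussianPDFReal a v x + u * gaussianPDFReal b v x
        - 2 * gaussianPDFReal (mid a b) v x),
      mul_pos hupos hga, mul_pos hupos hgb]
  unfold qRe
  have heq : u * ((gaussianPDFReal a v x + gaussianPDFReal b v x) / 2)
      = (u * gaussianPDFReal a v x + u * gaussianPDFReal b v x) / 2 := by ring
  rw [heq]
  linarith

lemma T2_le_W (hv : v ≠ 0) (x : ℝ) : T2fun v a b x ≤ Wfun v a b x := by
  have hgm := gaussianPDFReal_pos (mid a b) v x hv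
  have hq := qRe_pos (a := a) (b := b) hv x
  have h1 : T2fun v a b x = Real.log (gaussianPDFReal (mid a b) v x / qRe v a b x) := by
    unfold T2fun; rw [Real.log_div hgm.ne' hq.ne']
  rw [h1]
  exact Real.log_le_sub_one_of_pos (div_pos hgm hq)

lemma integrable_W (hv : v ≠ 0) (c : ℝ) :
    Integrable (Wfun v a b) (gaussianReal c v) := by
  refine gauss_integrable_of_bound c hv ?_
    (Real.exp ((b - a) ^ 2 / (8 * (v:ℝ))) + 1) 0 fun x => ?_
  · unfold Wfun
    exact ((continuous_gaussianPDFReal (mid a b)).div continuous_qRe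
      fun x => (qRe_pos hv x).ne').sub continuous_const
  · have hgm := gaussianPDFReal_pos (mid a b) v x hv
    have hq := qRe_pos (a := a) (b := b) hv x
    have h1 : gaussianPDFReal (mid a b) v x / qRe v a b x
        ≤ Real.exp ((b - a) ^ 2 / (8 * (v:ℝ))) := by
      rw [div_le_iff₀ hq]
      exact gm_le hv x
    have h2 : 0 < gaussianPDFReal (mid a b) v x / qRe v a b x := div_pos hgm hq
    rw [abs_le]
    unfold Wfun
    constructor <;> [skip; skip] <;> nlinarith [Real.exp_pos ((b - a) ^ 2 / (8 * (v:ℝ)))]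

lemma mix_zero (hv : v ≠ 0) :
    1 / 2 * ∫ x, Wfun v a b x ∂(gaussianReal a v)
      + 1 / 2 * ∫ x, Wfun v a b x ∂(gaussianReal b v) = 0 := by
  rw [gauss_integral_eq a hv, gauss_integral_eq b hv]
  have i1 : Integrable (fun x => Wfun v a b x * gaussianPDFReal a v x) volume :=
    (gauss_integrable_iff a hv).mp (integrable_W hv a)
  have i2 : Integrable (fun x => Wfun v a b x * gaussianPDFReal b v x) volume :=
    (gauss_integrable_iff b hv).mp (integrable_W hv b)
  have h3 : (fun x => 1 / 2 * (Wfun v a b x * gaussianPDFReal a v x)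
        + 1 / 2 * (Wfun v a b x * gaussianPDFReal b v x))
      = fun x => gaussianPDFReal (mid a b) v x - qRe v a b x := by
    funext x
    have hq := qRe_pos (a := a) (b := b) hv x
    have hqd : qRe v a b x = (gaussianPDFReal a v x + gaussianPDFReal b v x) / 2 := rfl
    calc 1 / 2 * (Wfun v a b x * gaussianPDFReal a v x)
          + 1 / 2 * (Wfun v a b x * gaussianPDFReal b v x)
        = Wfun v a b x * ((gaussianPDFReal a v x + gaussianPDFReal b v x) / 2) := by ring
      _ = Wfun v a b x * qRe v a b x := by rw [← hqd]
      _ = gaussianPDFReal (mid a b) v x - qRe v a b x := by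
          unfold Wfun; field_simp
  have iq : Integrable (qRe v a b) volume := by
    unfold qRe
    exact ((integrable_gaussianPDFReal a v).add (integrable_gaussianPDFReal b v)).div_const 2
  have hq1 : ∫ x, qRe v a b x = 1 := by
    unfold qRe
    rw [integral_div, integral_add (integrable_gaussianPDFReal a v)
      (integrable_gaussianPDFReal b v), integral_gaussianPDFReal_eq_one a hv,
      integral_gaussianPDFReal_eq_one b hv]
    norm_num
  rw [← integral_const_mul, ← integral_const_mul,
    ← integral_add (i1.const_mul _) (i2.const_mul _), h3,
    integral_sub (integrable_gaussianPDFReal _ v) iq,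
    integral_gaussianPDFReal_eq_one _ hv, hq1]
  ring

lemma core (hv : v ≠ 0) {B : ℝ} (hB : 0 < B) (hBv : B = (b - a) ^ 2 / (8 * (v:ℝ))) :
    Integrable (fun x => Real.log (gaussianPDFReal a v x) - Real.log (qRe v a b x))
        (gaussianReal a v)
      ∧ Integrable (fun x => Real.log (gaussianPDFReal b v x) - Real.log (qRe v a b x))
        (gaussianReal b v)
      ∧ 1 / 2 * ∫ x, (Real.log (gaussianPDFReal a v x) - Real.log (qRe v a b x))
            ∂(gaussianReal a v)
        + 1 / 2 * ∫ x, (Real.log (gaussianPDFReal b v x) - Real.log (qRe v a b x))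
            ∂(gaussianReal b v) ≤ B := by
  have hvr := coe_pos hv
  have hfa : (fun x => Real.log (gaussianPDFReal a v x) - Real.log (qRe v a b x))
      = fun x => Efun v a b a x + T2fun v a b x := by
    funext x
    rw [← log_sub_log (a := a) (b := b) hv a x]
    unfold T2fun
    ring
  have hfb : (fun x => Real.log (gaussianPDFReal b v x) - Real.log (qRe v a b x))
      = fun x => Efun v a b b x + T2fun v a b x := by
    funext x
    rw [← log_sub_log (a := a) (b := b) hv b x]
    unfold T2fun
    ring
  have hEa : ∫ x, Efun v a b a x ∂(gaussianReal a v) = B := by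
    rw [integral_Efun_self hv a, hBv]
    unfold mid
    field_simp
    ring
  have hEb : ∫ x, Efun v a b b x ∂(gaussianReal b v) = B := by
    rw [integral_Efun_self hv b, hBv]
    unfold mid
    field_simp
    ring
  refine ⟨by rw [hfa]; exact (integrable_Efun hv a a).add (integrable_T2 hv a),
    by rw [hfb]; exact (integrable_Efun hv b b).add (integrable_T2 hv b), ?_⟩
  rw [hfa, hfb, integral_add (integrable_Efun hv a a) (integrable_T2 hv a),
    integral_add (integrable_Efun hv b b) (integrable_T2 hv b), hEa, hEb]
  have hma := integral_mono (integrable_T2 (a := a) (b := b) hv a) (integrable_W hv a)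
    fun x => T2_le_W hv x
  have hmb := integral_mono (integrable_T2 (a := a) (b := b) hv b) (integrable_W hv b)
    fun x => T2_le_W hv x
  have hmix := mix_zero (a := a) (b := b) hv
  linarith

end TwoPointAux

open TwoPointAux

/-- One-dimensional two-point PAC privacy noise determination: if `S` is uniform on two
values, `R = f(S) + Z` with `Z ~ N(0, σ²)` independent of `S`, and
`σ² = (f(s₁) − f(s₀))² / (8B)` for `B > 0`, then `I(S; R) ≤ B`. -/
theorem two_point_gaussian_channel_mi_le
    {Ω : Type*} [MeasurableSpace Ω] (P : Measure Ω) [IsProbabilityMeasure P]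
    (S : Ω → Bool) (hS0 : P {ω | S ω = false} = 1 / 2) (hS1 : P {ω | S ω = true} = 1 / 2)
    (f : Bool → ℝ) (B : ℝ) (hB : 0 < B)
    (v : ℝ≥0) (hv : (v : ℝ) = (f true - f false) ^ 2 / (8 * B))
    (Z : Ω → ℝ) (hZ : P.map Z = gaussianReal 0 v)
    (hindep : IndepFun S Z P) (hSm : Measurable S) (hZm : Measurable Z) :
    mutualInfo P S (fun ω => f (S ω) + Z ω) ≤ ENNReal.ofReal B := by
  classical
  have hfm : Measurable f := measurable_from_top
  have hRm : Measurable (fun ω => f (S ω) + Z ω) := (hfm.comp hSm).add hZm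
  haveI hPS : IsProbabilityMeasure (P.map S) := Measure.isProbabilityMeasure_map hSm.aemeasurable
  haveI hPR : IsProbabilityMeasure (P.map (fun ω => f (S ω) + Z ω)) :=
    Measure.isProbabilityMeasure_map hRm.aemeasurable
  show klDiv (P.map fun ω => (S ω, f (S ω) + Z ω))
      ((P.map S).prod (P.map (fun ω => f (S ω) + Z ω))) ≤ ENNReal.ofReal B
  by_cases hvz : v = 0
  · -- degenerate case : the two values of f coincide, S and R are independent
    have hab : f true = f false := by
      have h2 : (f true - f false) ^ 2 / (8 * B) = 0 := by rw [← hv, hvz]; simp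
      have h3 := (div_eq_zero_iff.mp h2).resolve_right (by positivity)
      have h4 := pow_eq_zero_iff (two_ne_zero) |>.mp h3
      linarith [sub_eq_zero.mp h4]
    have hReq : (fun ω => f (S ω) + Z ω) = fun ω => f false + Z ω := by
      funext ω
      cases hs : S ω <;> simp [hs, hab]
    have hindep2 : IndepFun S (fun ω => f (S ω) + Z ω) P := by
      rw [hReq]
      exact hindep.comp measurable_id (measurable_const_add (f false))
    have hmap := (indepFun_iff_map_prod_eq_prod_map_map hSm.aemeasurable
      hRm.aemeasurable).mp hindep2
    rw [hmap]
    set μ0 := (P.map S).prod (P.map (fun ω => f (S ω) + Z ω)) with hμ0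
    have hself : μ0.rnDeriv μ0 =ᵐ[μ0] 1 := Measure.rnDeriv_self μ0
    have hlog : (fun x => Real.log (μ0.rnDeriv μ0 x).toReal) =ᵐ[μ0] fun _ => (0:ℝ) := by
      filter_upwards [hself] with x hx
      rw [hx]; simp
    unfold klDiv
    rw [if_pos ⟨Measure.AbsolutelyContinuous.refl μ0,
      (integrable_const (0:ℝ)).congr hlog.symm⟩, integral_congr_ae hlog]
    simp
  · -- main case
    have hv0 : v ≠ 0 := hvz
    have hvr : 0 < (v:ℝ) := coe_pos hv0
    have hBv : B = (f true - f false) ^ 2 / (8 * (v:ℝ)) := by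
      have h1 : (f true - f false) ^ 2 = 8 * B * (v:ℝ) := by
        rw [hv]; field_simp
      rw [h1]; field_simp
    -- the joint law
    have hSZ : P.map (fun ω => (S ω, Z ω)) = (P.map S).prod (gaussianReal 0 v) := by
      rw [← hZ]
      exact (indepFun_iff_map_prod_eq_prod_map_map hSm.aemeasurable hZm.aemeasurable).mp hindep
    have hTm : Measurable (fun p : Bool × ℝ => (p.1, f p.1 + p.2)) :=
      measurable_fst.prodMk ((hfm.comp measurable_fst).add measurable_snd)
    have hμS : P.map S = (1/2 : ℝ≥0∞) • Measure.dirac false + (1/2 : ℝ≥0∞) • Measure.dirac true := by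
      refine Measure.ext_of_singleton fun s => ?_
      cases s
      · rw [Measure.map_apply hSm (measurableSet_singleton _),
          show S ⁻¹' {false} = {ω | S ω = false} from rfl, hS0]
        simp [Measure.dirac_apply]
      · rw [Measure.map_apply hSm (measurableSet_singleton _),
          show S ⁻¹' {true} = {ω | S ω = true} from rfl, hS1]
        simp [Measure.dirac_apply]
    have hhalf_prod : ∀ (ν : Measure ℝ), SFinite ν →
        (((1:ℝ≥0∞)/2) • Measure.dirac false + ((1:ℝ≥0∞)/2) • Measure.dirac true).prod ν
          = ((1:ℝ≥0∞)/2) • ν.map (Prod.mk false) + ((1:ℝ≥0∞)/2) • ν.map (Prod.mk true) := by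
      intro ν hν
      rw [Measure.add_prod, TwoPointAux.smul_prod, TwoPointAux.smul_prod,
        Measure.dirac_prod, Measure.dirac_prod]
    have hJ0 : (P.map fun ω => (S ω, f (S ω) + Z ω))
        = ((P.map S).prod (gaussianReal 0 v)).map (fun p : Bool × ℝ => (p.1, f p.1 + p.2)) := by
      rw [← hSZ, Measure.map_map hTm (hSm.prodMk hZm)]
      rfl
    have hJ : (P.map fun ω => (S ω, f (S ω) + Z ω))
        = (1/2 : ℝ≥0∞) • (gaussianReal (f false) v).map (Prod.mk false)
          + (1/2 : ℝ≥0∞) • (gaussianReal (f true) v).map (Prod.mk true) := by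
      rw [hJ0, hμS, hhalf_prod _ inferInstance,
        Measure.map_add _ _ hTm, Measure.map_smul, Measure.map_smul,
        Measure.map_map hTm measurable_prodMk_left,
        Measure.map_map hTm measurable_prodMk_left,
        show ((fun p : Bool × ℝ => (p.1, f p.1 + p.2)) ∘ Prod.mk false)
          = (Prod.mk false : ℝ → Bool × ℝ) ∘ (fun x => f false + x) from rfl,
        show ((fun p : Bool × ℝ => (p.1, f p.1 + p.2)) ∘ Prod.mk true)
          = (Prod.mk true : ℝ → Bool × ℝ) ∘ (fun x => f true + x) from rfl,
        ← Measure.map_map measurable_prodMk_left (measurable_const_add (f false)),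
        ← Measure.map_map measurable_prodMk_left (measurable_const_add (f true)),
        gauss_map_const_add, gauss_map_const_add]
    have hQ : P.map (fun ω => f (S ω) + Z ω)
        = (1/2 : ℝ≥0∞) • gaussianReal (f false) v + (1/2 : ℝ≥0∞) • gaussianReal (f true) v := by
      have hcomp : (fun ω => f (S ω) + Z ω)
          = Prod.snd ∘ (fun ω => (S ω, f (S ω) + Z ω)) := rfl
      conv_lhs => rw [hcomp, ← Measure.map_map measurable_snd (hSm.prodMk hRm)]
      rw [hJ, Measure.map_add _ _ measurable_snd, Measure.map_smul, Measure.map_smul,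
        Measure.map_map measurable_snd measurable_prodMk_left,
        Measure.map_map measurable_snd measurable_prodMk_left]
      simp [Function.comp_def, Measure.map_id']
    -- density form of the marginal of R
    set qq : ℝ → ℝ≥0∞ := fun x =>
      (1/2 : ℝ≥0∞) * gaussianPDF (f false) v x + (1/2 : ℝ≥0∞) * gaussianPDF (f true) v x
      with hqqdef
    have hqqm : Measurable qq := by
      rw [hqqdef]
      exact ((measurable_gaussianPDF (f false) v).const_mul _).add
        ((measurable_gaussianPDF (f true) v).const_mul _)
    have hqqne : ∀ x, qq x ≠ 0 := by
      intro x
      have h1 : (0:ℝ≥0∞) < (1/2 : ℝ≥0∞) * gaussianPDF (f false) v x :=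
        ENNReal.mul_pos (by norm_num) (gaussianPDF_pos _ hv0 x).ne'
      have h2 : (1/2 : ℝ≥0∞) * gaussianPDF (f false) v x ≤ qq x := by
        rw [hqqdef]; exact le_self_add
      exact (h1.trans_le h2).ne'
    have hqqtop : ∀ x, qq x ≠ ∞ := by
      intro x
      rw [hqqdef]
      exact ENNReal.add_ne_top.mpr
        ⟨ENNReal.mul_ne_top (by norm_num) ENNReal.ofReal_ne_top,
         ENNReal.mul_ne_top (by norm_num) ENNReal.ofReal_ne_top⟩
    have hQd : P.map (fun ω => f (S ω) + Z ω) = volume.withDensity qq := by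
      rw [hQ, gaussianReal_of_var_ne_zero _ hv0, gaussianReal_of_var_ne_zero _ hv0,
        ← withDensity_smul' _ _ (by norm_num : (1/2:ℝ≥0∞) ≠ ∞),
        ← withDensity_smul' _ _ (by norm_num : (1/2:ℝ≥0∞) ≠ ∞),
        ← withDensity_add_right _ ((measurable_gaussianPDF (f true) v).const_smul _)]
      rfl
    have hPi : (P.map S).prod (P.map (fun ω => f (S ω) + Z ω))
        = (1/2 : ℝ≥0∞) • (P.map (fun ω => f (S ω) + Z ω)).map (Prod.mk false)
          + (1/2 : ℝ≥0∞) • (P.map (fun ω => f (S ω) + Z ω)).map (Prod.mk true) := by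
      rw [hμS]
      exact hhalf_prod _ inferInstance
    -- the density of the joint w.r.t. the product
    set rho : Bool × ℝ → ℝ≥0∞ := fun p => gaussianPDF (f p.1) v p.2 / qq p.2 with hrhodef
    have hrhom : Measurable rho := by
      have h1 : Measurable (fun p : Bool × ℝ => gaussianPDF (f p.1) v p.2) := by
        have heq : (fun p : Bool × ℝ => gaussianPDF (f p.1) v p.2)
            = fun p => if p.1 = true then gaussianPDF (f true) v p.2
              else gaussianPDF (f false) v p.2 := by
          funext p
          cases hp : p.1 <;> simp [hp]
        rw [heq]
        exact Measurable.ite (measurable_fst (measurableSet_singleton true))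
          ((measurable_gaussianPDF (f true) v).comp measurable_snd)
          ((measurable_gaussianPDF (f false) v).comp measurable_snd)
      exact h1.div (hqqm.comp measurable_snd)
    have hfiber : ∀ c : ℝ, (volume.withDensity qq).withDensity
        (fun x => gaussianPDF c v x / qq x) = gaussianReal c v := by
      intro c
      change (volume.withDensity qq).withDensity (gaussianPDF c v / qq) = _
      rw [← withDensity_mul _ hqqm ((measurable_gaussianPDF c v).div hqqm),
        gaussianReal_of_var_ne_zero c hv0]
      congr 1
      funext x
      show qq x * (gaussianPDF c v x / qq x) = gaussianPDF c v x
      exact ENNReal.mul_div_cancel (hqqne x) (hqqtop x)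
    have hJrho : (P.map fun ω => (S ω, f (S ω) + Z ω))
        = ((P.map S).prod (P.map (fun ω => f (S ω) + Z ω))).withDensity rho := by
      rw [hPi, withDensity_add_measure, withDensity_smul_measure, withDensity_smul_measure,
        TwoPointAux.withDensity_map (measurableEmbedding_prodMk_left false) _ hrhom,
        TwoPointAux.withDensity_map (measurableEmbedding_prodMk_left true) _ hrhom, hQd]
      rw [show (fun x => rho (false, x)) = fun x => gaussianPDF (f false) v x / qq x from rfl,
        show (fun x => rho (true, x)) = fun x => gaussianPDF (f true) v x / qq x from rfl,
        hfiber (f false), hfiber (f true)]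
      exact hJ
    -- absolute continuity and the Radon-Nikodym derivative
    have hac : (P.map fun ω => (S ω, f (S ω) + Z ω))
        ≪ (P.map S).prod (P.map (fun ω => f (S ω) + Z ω)) := by
      rw [hJrho]
      exact withDensity_absolutelyContinuous _ _
    have hrnPi : ((P.map fun ω => (S ω, f (S ω) + Z ω)).rnDeriv
          ((P.map S).prod (P.map (fun ω => f (S ω) + Z ω))))
        =ᵐ[(P.map S).prod (P.map (fun ω => f (S ω) + Z ω))] rho := by
      rw [hJrho]
      exact Measure.rnDeriv_withDensity _ hrhom
    have hrnJ : ((P.map fun ω => (S ω, f (S ω) + Z ω)).rnDeriv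
          ((P.map S).prod (P.map (fun ω => f (S ω) + Z ω))))
        =ᵐ[P.map fun ω => (S ω, f (S ω) + Z ω)] rho :=
      hac.ae_le hrnPi
    -- identification of the log-density
    have hqqtoReal : ∀ x, (qq x).toReal = qRe v (f false) (f true) x := by
      intro x
      have hx : qq x = (1/2 : ℝ≥0∞) * gaussianPDF (f false) v x
          + (1/2 : ℝ≥0∞) * gaussianPDF (f true) v x := rfl
      have h12 : ((1:ℝ≥0∞)/2).toReal = 1/2 := by
        rw [ENNReal.toReal_div]
        simp
      have hne1 : (1/2 : ℝ≥0∞) * gaussianPDF (f false) v x ≠ ⊤ :=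
        ENNReal.mul_ne_top (by norm_num) (by simp only [gaussianPDF]; exact ENNReal.ofReal_ne_top)
      have hne2 : (1/2 : ℝ≥0∞) * gaussianPDF (f true) v x ≠ ⊤ :=
        ENNReal.mul_ne_top (by norm_num) (by simp only [gaussianPDF]; exact ENNReal.ofReal_ne_top)
      rw [hx, ENNReal.toReal_add hne1 hne2, ENNReal.toReal_mul, ENNReal.toReal_mul, h12]
      simp only [gaussianPDF, ENNReal.toReal_ofReal (gaussianPDFReal_nonneg (f false) v x),
        ENNReal.toReal_ofReal (gaussianPDFReal_nonneg (f true) v x)]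
      unfold qRe
      ring
    have hpdfpos : ∀ (c : ℝ) x, 0 < gaussianPDFReal c v x :=
      fun c x => gaussianPDFReal_pos c v x hv0
    have hrhotoReal : ∀ p : Bool × ℝ, Real.log ((rho p).toReal)
        = Real.log (gaussianPDFReal (f p.1) v p.2)
          - Real.log (qRe v (f false) (f true) p.2) := by
      intro p
      rw [hrhodef]
      show Real.log ((gaussianPDF (f p.1) v p.2 / qq p.2).toReal) = _
      rw [ENNReal.toReal_div, gaussianPDF,
        ENNReal.toReal_ofReal (gaussianPDFReal_nonneg _ _ _), hqqtoReal,
        Real.log_div (hpdfpos _ _).ne' (qRe_pos hv0 _).ne']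
    have hlog_eq : (fun p => Real.log (((P.map fun ω => (S ω, f (S ω) + Z ω)).rnDeriv
          ((P.map S).prod (P.map (fun ω => f (S ω) + Z ω))) p).toReal))
        =ᵐ[P.map fun ω => (S ω, f (S ω) + Z ω)]
        (fun p : Bool × ℝ => Real.log (gaussianPDFReal (f p.1) v p.2)
          - Real.log (qRe v (f false) (f true) p.2)) := by
      filter_upwards [hrnJ] with p hp
      rw [hp, hrhotoReal p]
    -- transport of integrability and integrals to the two Gaussian fibers
    have hcore := TwoPointAux.core (a := f false) (b := f true) hv0 hB hBv
    obtain ⟨hIa, hIb, hsum⟩ := hcore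
    have e1 : Integrable (fun p : Bool × ℝ => Real.log (gaussianPDFReal (f p.1) v p.2)
          - Real.log (qRe v (f false) (f true) p.2))
        ((1/2 : ℝ≥0∞) • (gaussianReal (f false) v).map (Prod.mk false)) := by
      rw [integrable_smul_measure (by norm_num) (by norm_num)]
      exact ((measurableEmbedding_prodMk_left false).integrable_map_iff).mpr hIa
    have e2 : Integrable (fun p : Bool × ℝ => Real.log (gaussianPDFReal (f p.1) v p.2)
          - Real.log (qRe v (f false) (f true) p.2))
        ((1/2 : ℝ≥0∞) • (gaussianReal (f true) v).map (Prod.mk true)) := by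
      rw [integrable_smul_measure (by norm_num) (by norm_num)]
      exact ((measurableEmbedding_prodMk_left true).integrable_map_iff).mpr hIb
    have hint : Integrable (fun p : Bool × ℝ => Real.log (gaussianPDFReal (f p.1) v p.2)
          - Real.log (qRe v (f false) (f true) p.2))
        (P.map fun ω => (S ω, f (S ω) + Z ω)) := by
      rw [hJ]
      exact e1.add_measure e2
    have hval : ∫ p, (Real.log (gaussianPDFReal (f p.1) v p.2)
          - Real.log (qRe v (f false) (f true) p.2))
            ∂(P.map fun ω => (S ω, f (S ω) + Z ω))
        = 1 / 2 * ∫ x, (Real.log (gaussianPDFReal (f false) v x)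
            - Real.log (qRe v (f false) (f true) x)) ∂(gaussianReal (f false) v)
          + 1 / 2 * ∫ x, (Real.log (gaussianPDFReal (f true) v x)
            - Real.log (qRe v (f false) (f true) x)) ∂(gaussianReal (f true) v) := by
      rw [hJ, integral_add_measure e1 e2, integral_smul_measure, integral_smul_measure,
        (measurableEmbedding_prodMk_left false).integral_map,
        (measurableEmbedding_prodMk_left true).integral_map]
      norm_num
    -- conclusion
    unfold klDiv
    rw [if_pos ⟨hac, hint.congr hlog_eq.symm⟩, integral_congr_ae hlog_eq, hval]
    exact ENNReal.ofReal_le_ofReal hsum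
end

section
/- Among all choices of per-coordinate noise variances σ_i² > 0 subject to the constraint Σ_{i=1}^d λ_i/(2σ_i²) ≤ B (with λ_i > 0 given and B > 0), the total noise magnitude Σ_i σ_i² is minimized by σ_i² = √λ_i · (Σ_j √λ_j)/(2B), achieving minimum value (Σ_j √λ_j)² / (2B). -/
open Finset in
/-- Optimality of the anisotropic PAC noise shape: among all per-coordinate noise
variances `σᵢ² > 0` with `∑ᵢ λᵢ/(2σᵢ²) ≤ B`, the total noise `∑ᵢ σᵢ²` is minimized by
`σᵢ² = √λᵢ · (∑ⱼ √λⱼ)/(2B)`, achieving minimum value `(∑ⱼ √λⱼ)²/(2B)`. -/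
theorem pac_noise_optimality (d : ℕ) (lam : Fin d → ℝ) (B : ℝ)
    (hlam : ∀ i, 0 < lam i) (hB : 0 < B) :
    (∀ σsq : Fin d → ℝ, (∀ i, 0 < σsq i) →
        (∑ i : Fin d, lam i / (2 * σsq i)) ≤ B →
        (∑ j : Fin d, Real.sqrt (lam j)) ^ 2 / (2 * B) ≤ ∑ i : Fin d, σsq i) ∧
    (∀ i, 0 < Real.sqrt (lam i) * (∑ j : Fin d, Real.sqrt (lam j)) / (2 * B)) ∧
    (∑ i : Fin d, lam i /
        (2 * (Real.sqrt (lam i) * (∑ j : Fin d, Real.sqrt (lam j)) / (2 * B)))) ≤ B ∧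
    (∑ i : Fin d, Real.sqrt (lam i) * (∑ j : Fin d, Real.sqrt (lam j)) / (2 * B))
      = (∑ j : Fin d, Real.sqrt (lam j)) ^ 2 / (2 * B) := by
  set S := ∑ j : Fin d, Real.sqrt (lam j) with hS
  have hsqrt : ∀ i, 0 < Real.sqrt (lam i) := fun i => Real.sqrt_pos.2 (hlam i)
  have hSnn : 0 ≤ S := Finset.sum_nonneg fun i _ => (hsqrt i).le
  refine ⟨?_, ?_, ?_, ?_⟩
  · intro σsq hpos hcon
    have key : S ^ 2 ≤ (∑ i : Fin d, lam i / (2 * σsq i)) * (∑ i : Fin d, 2 * σsq i) := by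
      have := Finset.sum_mul_sq_le_sq_mul_sq Finset.univ
        (fun i => Real.sqrt (lam i / (2 * σsq i))) (fun i => Real.sqrt (2 * σsq i))
      have heq : ∀ i : Fin d, Real.sqrt (lam i / (2 * σsq i)) * Real.sqrt (2 * σsq i)
          = Real.sqrt (lam i) := by
        intro i
        have h1 := hlam i; have h2 := hpos i
        rw [← Real.sqrt_mul (by positivity), div_mul_cancel₀ _ (by positivity)]
      have heq2 : ∀ i : Fin d, Real.sqrt (lam i / (2 * σsq i)) ^ 2 = lam i / (2 * σsq i) := by
        intro i; have h1 := hlam i; have h2 := hpos i; exact Real.sq_sqrt (by positivity)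
      have heq3 : ∀ i : Fin d, Real.sqrt (2 * σsq i) ^ 2 = 2 * σsq i := by
        intro i; have h1 := hlam i; have h2 := hpos i; exact Real.sq_sqrt (by positivity)
      simp only [heq, heq2, heq3] at this
      exact this
    have h2 : S ^ 2 ≤ B * (2 * ∑ i : Fin d, σsq i) := by
      calc S ^ 2 ≤ (∑ i : Fin d, lam i / (2 * σsq i)) * (∑ i : Fin d, 2 * σsq i) := key
        _ ≤ B * (∑ i : Fin d, 2 * σsq i) := by
            apply mul_le_mul_of_nonneg_right hcon
            exact Finset.sum_nonneg fun i _ => by have := hpos i; positivity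
        _ = B * (2 * ∑ i : Fin d, σsq i) := by rw [← Finset.mul_sum]
    rw [div_le_iff₀ (by positivity)]
    nlinarith [h2]
  · intro i
    have hSpos : 0 < S := Finset.sum_pos (fun j _ => hsqrt j) ⟨i, Finset.mem_univ i⟩
    have h1 := hsqrt i
    positivity
  · rcases Nat.eq_zero_or_pos d with hd | hd
    · subst hd; simp; exact hB.le
    · have hSpos : 0 < S := Finset.sum_pos (fun j _ => hsqrt j)
        ⟨⟨0, hd⟩, Finset.mem_univ _⟩
      have : ∀ i : Fin d, lam i / (2 * (Real.sqrt (lam i) * S / (2 * B)))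
          = Real.sqrt (lam i) * (B / S) := by
        intro i
        have h2 := hsqrt i
        rw [div_eq_iff (by positivity), ← Real.mul_self_sqrt (hlam i).le]
        field_simp
        ring
        rw [Real.sqrt_sq h2.le]
      rw [Finset.sum_congr rfl fun i _ => this i, ← Finset.sum_mul, ← hS]
      have hEq : S * (B / S) = B := by field_simp
      rw [hEq]
  · rw [← Finset.sum_div, ← Finset.sum_mul, ← hS, sq]
end
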